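/- Let α ∈ ℝ, A, B ∈ ℂ with Re(e^{iα}A) < Re(e^{iα}B), let m ≥ 1, and let φ = (φ₁,…,φ_m) and ψ = (ψ₁,…,ψ_m) be m-tuples of measurable functions on e^{iα}ℝ with ‖φᵢ‖_α^{A,B} ≤ a and ‖ψᵢ‖_α^{A,B} ≤ a for all i, for some a ≥ 0. For a multi-index l = (l₁,…,l_m) ∈ ℕ^m with |l| := l₁+⋯+l_m ≥ 1, let φ^{*l} := φ₁^{*l₁} * ⋯ * φ_m^{*l_m}, the convolution product in direction α of the components of φ, the i-th taken lᵢ times. Then ‖φ^{*l} − ψ^{*l}‖_α^{A,B} ≤ |l| · a^{|l|−1} · max_i ‖φᵢ − ψᵢ‖_α^{A,B}; and if moreover all |φᵢ|_α^{A,B} and |ψᵢ|_α^{A,B} are finite, then |φ^{*l} − ψ^{*l}|_α^{A,B} ≤ |l| · a^{|l|−1} · max_i |φᵢ − ψᵢ|_α^{A,B}. -/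

import Mathlib

open Complex MeasureTheory

/-- The weight `|e^{−A e^{iα}s}| + |e^{−B e^{iα}s}|`. -/
noncomputable def BLweight (α : ℝ) (A B : ℂ) (s : ℝ) : ℝ :=
  ‖Complex.exp (-A * (Complex.exp (α * Complex.I) * s))‖ +
    ‖Complex.exp (-B * (Complex.exp (α * Complex.I) * s))‖

/-- The integral norm `‖φ‖_α^{A,B}` (functions on `e^{iα}ℝ` identified with functions
of the real parameter `s`), valued in `ℝ≥0∞`. -/
noncomputable def wnormE (α : ℝ) (A B : ℂ) (f : ℝ → ℂ) : ENNReal :=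
  ∫⁻ s : ℝ, ENNReal.ofReal (‖f s‖ * BLweight α A B s)

/-- The sup norm `|φ|_α^{A,B}`, valued in `ℝ≥0∞`. -/
noncomputable def snormE (α : ℝ) (A B : ℂ) (f : ℝ → ℂ) : ENNReal :=
  ⨆ s : ℝ, ENNReal.ofReal (‖f s‖ * BLweight α A B s)

/-- Convolution in direction `α`: `(f*g)(e^{iα}s) = e^{iα}∫ f(e^{iα}u) g(e^{iα}(s−u)) du`. -/
noncomputable def convDir (α : ℝ) (f g : ℝ → ℂ) : ℝ → ℂ :=
  fun s => Complex.exp (α * Complex.I) * ∫ u : ℝ, f u * g (s - u)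

/-- Convolution product of a (nonempty) list of functions in direction `α`. -/
noncomputable def convList (α : ℝ) : List (ℝ → ℂ) → (ℝ → ℂ)
  | [] => fun _ => 0
  | f :: l => l.foldl (convDir α) f

/-- The multi-convolution `φ^{*l} = φ₁^{*l₁} * ⋯ * φ_m^{*l_m}`. -/
noncomputable def iterConv (α : ℝ) {m : ℕ} (φ : Fin m → ℝ → ℂ) (l : Fin m → ℕ) :
    ℝ → ℂ :=
  convList α ((List.finRange m).flatMap fun i => List.replicate (l i) (φ i))

/-!
Since `s ↦ |e^{−C e^{iα}s}|` is multiplicative, the weight is submultiplicative,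
`w(s) ≤ w(u)·w(s − u)`. Hence `|f * g|·w` is dominated by the convolution of `|f|·w` with
`|g|·w`, which gives Young's inequalities and the integrability of `u ↦ f(u) g(s − u)`
(for almost every `s` in general, for every `s` when the sup norm of `g` is finite).
The estimate then telescopes along the word of the multi-index:
`f * p − g * q = f * (p − q) + (f − g) * q`, where the partial product `f` of `k + 1` factors
has integral norm `≤ a^{k+1}`, so each of the `|l|` letters contributes `a^{|l|−1} · maxᵢ ‖φᵢ − ψᵢ‖`.
-/

open scoped ENNReal

section WeightedNorms

variable (α : ℝ) (A B : ℂ)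

lemma BLweight_pos (s : ℝ) : 0 < BLweight α A B s :=
  add_pos_of_pos_of_nonneg (norm_pos_iff.mpr (Complex.exp_ne_zero _)) (norm_nonneg _)

lemma continuous_BLweight : Continuous (BLweight α A B) := by
  unfold BLweight; fun_prop

lemma BLweight_le_mul_BLweight_sub (s u : ℝ) :
    BLweight α A B s ≤ BLweight α A B u * BLweight α A B (s - u) := by
  have hsplit : ∀ C : ℂ, ‖Complex.exp (-C * (Complex.exp (α * Complex.I) * s))‖ =
      ‖Complex.exp (-C * (Complex.exp (α * Complex.I) * u))‖ *
        ‖Complex.exp (-C * (Complex.exp (α * Complex.I) * ↑(s - u)))‖ := by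
    intro C
    rw [← norm_mul, ← Complex.exp_add]
    push_cast
    ring_nf
  simp only [BLweight, hsplit A, hsplit B]
  nlinarith [norm_nonneg (Complex.exp (-A * (Complex.exp (α * Complex.I) * u))),
    norm_nonneg (Complex.exp (-A * (Complex.exp (α * Complex.I) * ↑(s - u)))),
    norm_nonneg (Complex.exp (-B * (Complex.exp (α * Complex.I) * u))),
    norm_nonneg (Complex.exp (-B * (Complex.exp (α * Complex.I) * ↑(s - u))))]

noncomputable def weightedEnorm (f : ℝ → ℂ) (s : ℝ) : ℝ≥0∞ :=
  ENNReal.ofReal (‖f s‖ * BLweight α A B s)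

variable {α A B}

lemma Measurable.weightedEnorm {f : ℝ → ℂ} (hf : Measurable f) :
    Measurable (weightedEnorm α A B f) :=
  (hf.norm.mul (continuous_BLweight α A B).measurable).ennreal_ofReal

lemma weightedEnorm_le_snormE (f : ℝ → ℂ) (s : ℝ) :
    weightedEnorm α A B f s ≤ snormE α A B f :=
  le_iSup (weightedEnorm α A B f) s

lemma weightedEnorm_add_le (f g : ℝ → ℂ) (s : ℝ) :
    weightedEnorm α A B (f + g) s ≤ weightedEnorm α A B f s + weightedEnorm α A B g s := by
  have hw := (BLweight_pos α A B s).le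
  rw [weightedEnorm, weightedEnorm, weightedEnorm,
    ← ENNReal.ofReal_add (by positivity) (by positivity), ← add_mul]
  exact ENNReal.ofReal_le_ofReal (mul_le_mul_of_nonneg_right (norm_add_le _ _) hw)

lemma wnormE_add_le {f : ℝ → ℂ} (hf : Measurable f) (g : ℝ → ℂ) :
    wnormE α A B (f + g) ≤ wnormE α A B f + wnormE α A B g :=
  (lintegral_mono (weightedEnorm_add_le f g)).trans_eq (lintegral_add_left hf.weightedEnorm _)

lemma snormE_add_le (f g : ℝ → ℂ) :
    snormE α A B (f + g) ≤ snormE α A B f + snormE α A B g :=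
  iSup_le fun s => (weightedEnorm_add_le f g s).trans
    (add_le_add (weightedEnorm_le_snormE f s) (weightedEnorm_le_snormE g s))

end WeightedNorms

section Convolution

variable {α : ℝ} {A B : ℂ}

lemma enorm_mul_mul_BLweight_le (f g : ℝ → ℂ) (s u : ℝ) :
    ‖f u * g (s - u)‖ₑ * ENNReal.ofReal (BLweight α A B s) ≤
      weightedEnorm α A B f u * weightedEnorm α A B g (s - u) := by
  have hu := (BLweight_pos α A B u).le
  have hsu := (BLweight_pos α A B (s - u)).le
  rw [← ofReal_norm, ← ENNReal.ofReal_mul (norm_nonneg _), weightedEnorm, weightedEnorm,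
    ← ENNReal.ofReal_mul (by positivity), norm_mul]
  refine ENNReal.ofReal_le_ofReal ?_
  calc ‖f u‖ * ‖g (s - u)‖ * BLweight α A B s
      ≤ ‖f u‖ * ‖g (s - u)‖ * (BLweight α A B u * BLweight α A B (s - u)) := by
        gcongr; exact BLweight_le_mul_BLweight_sub α A B s u
    _ = ‖f u‖ * BLweight α A B u * (‖g (s - u)‖ * BLweight α A B (s - u)) := by ring

lemma weightedEnorm_convDir_le (f g : ℝ → ℂ) (s : ℝ) :
    weightedEnorm α A B (convDir α f g) s ≤
      ∫⁻ u, weightedEnorm α A B f u * weightedEnorm α A B g (s - u) := by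
  have hphase : ‖Complex.exp (α * Complex.I)‖ = 1 := Complex.norm_exp_ofReal_mul_I α
  calc weightedEnorm α A B (convDir α f g) s
      = ‖∫ u, f u * g (s - u)‖ₑ * ENNReal.ofReal (BLweight α A B s) := by
        rw [weightedEnorm, convDir, norm_mul, hphase, one_mul, ENNReal.ofReal_mul (norm_nonneg _),
          ofReal_norm]
    _ ≤ (∫⁻ u, ‖f u * g (s - u)‖ₑ) * ENNReal.ofReal (BLweight α A B s) := by
        gcongr; exact enorm_integral_le_lintegral_enorm _
    _ = ∫⁻ u, ‖f u * g (s - u)‖ₑ * ENNReal.ofReal (BLweight α A B s) :=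
        (lintegral_mul_const' _ _ ENNReal.ofReal_ne_top).symm
    _ ≤ _ := lintegral_mono fun u => enorm_mul_mul_BLweight_le f g s u

lemma integrable_mul_sub_of_lintegral_lt_top {f g : ℝ → ℂ} (hf : Measurable f) (hg : Measurable g)
    {s : ℝ} (h : ∫⁻ u, weightedEnorm α A B f u * weightedEnorm α A B g (s - u) < ⊤) :
    Integrable fun u => f u * g (s - u) := by
  refine ⟨(hf.mul (hg.comp (measurable_const.sub measurable_id))).aestronglyMeasurable, ?_⟩
  have hle : (∫⁻ u, ‖f u * g (s - u)‖ₑ) * ENNReal.ofReal (BLweight α A B s) < ⊤ := by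
    rw [← lintegral_mul_const' _ _ ENNReal.ofReal_ne_top]
    exact (lintegral_mono fun u => enorm_mul_mul_BLweight_le f g s u).trans_lt h
  have hw : ENNReal.ofReal (BLweight α A B s) ≠ 0 := by
    simpa using BLweight_pos α A B s
  exact ENNReal.lt_top_of_mul_ne_top_left hle.ne hw

lemma lintegral_weightedEnorm_mul_le_wnormE_mul_snormE {f : ℝ → ℂ} (hf : Measurable f)
    (g : ℝ → ℂ) (s : ℝ) :
    ∫⁻ u, weightedEnorm α A B f u * weightedEnorm α A B g (s - u) ≤
      wnormE α A B f * snormE α A B g :=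
  (lintegral_mono fun u => mul_le_mul_right (weightedEnorm_le_snormE g (s - u)) _).trans_eq
    (lintegral_mul_const _ hf.weightedEnorm)

lemma lintegral_weightedEnorm_mul_le_snormE_mul_wnormE (f : ℝ → ℂ) {g : ℝ → ℂ}
    (hg : Measurable g) (s : ℝ) :
    ∫⁻ u, weightedEnorm α A B f u * weightedEnorm α A B g (s - u) ≤
      snormE α A B f * wnormE α A B g := by
  calc ∫⁻ u, weightedEnorm α A B f u * weightedEnorm α A B g (s - u)
      ≤ ∫⁻ u, snormE α A B f * weightedEnorm α A B g (s - u) :=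
        lintegral_mono fun u => mul_le_mul_left (weightedEnorm_le_snormE f u) _
    _ = snormE α A B f * wnormE α A B g := by
        rw [lintegral_const_mul (f := fun u => weightedEnorm α A B g (s - u)) _
            (hg.weightedEnorm.comp (measurable_const.sub measurable_id)),
          lintegral_sub_left_eq_self (weightedEnorm α A B g) s]
        rfl

lemma measurable_weightedEnorm_mul_sub {f g : ℝ → ℂ} (hf : Measurable f) (hg : Measurable g) :
    Measurable fun p : ℝ × ℝ => weightedEnorm α A B f p.2 * weightedEnorm α A B g (p.1 - p.2) :=
  (hf.weightedEnorm.comp measurable_snd).mul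
    (hg.weightedEnorm.comp (measurable_fst.sub measurable_snd))

lemma lintegral_lintegral_weightedEnorm_mul {f g : ℝ → ℂ} (hf : Measurable f)
    (hg : Measurable g) :
    ∫⁻ s, ∫⁻ u, weightedEnorm α A B f u * weightedEnorm α A B g (s - u) =
      wnormE α A B f * wnormE α A B g := by
  rw [lintegral_lintegral_swap (measurable_weightedEnorm_mul_sub hf hg).aemeasurable]
  calc ∫⁻ u, ∫⁻ s, weightedEnorm α A B f u * weightedEnorm α A B g (s - u)
      = ∫⁻ u, weightedEnorm α A B f u * wnormE α A B g := by
        refine lintegral_congr fun u => ?_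
        rw [lintegral_const_mul (f := fun s => weightedEnorm α A B g (s - u)) _
            (hg.weightedEnorm.comp (measurable_id.sub measurable_const)),
          lintegral_sub_right_eq_self (weightedEnorm α A B g) u]
        rfl
    _ = wnormE α A B f * wnormE α A B g := lintegral_mul_const _ hf.weightedEnorm

lemma measurable_convDir {f g : ℝ → ℂ} (hf : Measurable f) (hg : Measurable g) :
    Measurable (convDir α f g) :=
  ((hf.comp measurable_snd).mul (hg.comp (measurable_fst.sub measurable_snd))
    ).stronglyMeasurable.integral_prod_right'.measurable.const_mul _

lemma wnormE_convDir_le {f g : ℝ → ℂ} (hf : Measurable f) (hg : Measurable g) :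
    wnormE α A B (convDir α f g) ≤ wnormE α A B f * wnormE α A B g :=
  (lintegral_mono (weightedEnorm_convDir_le f g)).trans_eq
    (lintegral_lintegral_weightedEnorm_mul hf hg)

lemma snormE_convDir_le_wnormE_mul_snormE {f : ℝ → ℂ} (hf : Measurable f) (g : ℝ → ℂ) :
    snormE α A B (convDir α f g) ≤ wnormE α A B f * snormE α A B g :=
  iSup_le fun s => (weightedEnorm_convDir_le f g s).trans
    (lintegral_weightedEnorm_mul_le_wnormE_mul_snormE hf g s)

lemma snormE_convDir_le_snormE_mul_wnormE (f : ℝ → ℂ) {g : ℝ → ℂ} (hg : Measurable g) :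
    snormE α A B (convDir α f g) ≤ snormE α A B f * wnormE α A B g :=
  iSup_le fun s => (weightedEnorm_convDir_le f g s).trans
    (lintegral_weightedEnorm_mul_le_snormE_mul_wnormE f hg s)

lemma convDir_sub_convDir {f g p q : ℝ → ℂ} {s : ℝ}
    (hfp : Integrable fun u => f u * p (s - u)) (hfq : Integrable fun u => f u * q (s - u))
    (hgq : Integrable fun u => g u * q (s - u)) :
    convDir α f p s - convDir α g q s = convDir α f (p - q) s + convDir α (f - g) q s := by
  simp only [convDir, Pi.sub_apply, mul_sub, sub_mul]
  rw [integral_sub hfp hfq, integral_sub hfq hgq]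
  ring

lemma ae_integrable_mul_sub {f g : ℝ → ℂ} (hf : Measurable f) (hg : Measurable g)
    (hfW : wnormE α A B f < ⊤) (hgW : wnormE α A B g < ⊤) :
    ∀ᵐ s, Integrable fun u => f u * g (s - u) := by
  have hmeas : Measurable fun s => ∫⁻ u, weightedEnorm α A B f u * weightedEnorm α A B g (s - u) :=
    (measurable_weightedEnorm_mul_sub hf hg).lintegral_prod_right'
  have hfin := lintegral_lintegral_weightedEnorm_mul (α := α) (A := A) (B := B) hf hg ▸
    ENNReal.mul_lt_top hfW hgW
  filter_upwards [ae_lt_top hmeas hfin.ne] with s hs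
  exact integrable_mul_sub_of_lintegral_lt_top hf hg hs

lemma integrable_mul_sub_of_snormE_lt_top {f g : ℝ → ℂ} (hf : Measurable f) (hg : Measurable g)
    (hfW : wnormE α A B f < ⊤) (hgS : snormE α A B g < ⊤) (s : ℝ) :
    Integrable fun u => f u * g (s - u) :=
  integrable_mul_sub_of_lintegral_lt_top (α := α) (A := A) (B := B) hf hg
    ((lintegral_weightedEnorm_mul_le_wnormE_mul_snormE hf g s).trans_lt
      (ENNReal.mul_lt_top hfW hgS))

lemma wnormE_congr_ae {f g : ℝ → ℂ} (h : f =ᵐ[volume] g) : wnormE α A B f = wnormE α A B g :=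
  lintegral_congr_ae (h.mono fun s hs => by simp only [hs])

lemma wnormE_convDir_sub_convDir_le {f g p q : ℝ → ℂ} (hf : Measurable f) (hg : Measurable g)
    (hp : Measurable p) (hq : Measurable q) (hfW : wnormE α A B f < ⊤)
    (hgW : wnormE α A B g < ⊤) (hpW : wnormE α A B p < ⊤) (hqW : wnormE α A B q < ⊤) :
    wnormE α A B (convDir α f p - convDir α g q) ≤
      wnormE α A B f * wnormE α A B (p - q) + wnormE α A B (f - g) * wnormE α A B q := by
  have hsplit :
      convDir α f p - convDir α g q =ᵐ[volume] convDir α f (p - q) + convDir α (f - g) q := by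
    filter_upwards [ae_integrable_mul_sub hf hp hfW hpW, ae_integrable_mul_sub hf hq hfW hqW,
      ae_integrable_mul_sub hg hq hgW hqW] with s hfp hfq hgq
    exact convDir_sub_convDir hfp hfq hgq
  calc wnormE α A B (convDir α f p - convDir α g q)
      = wnormE α A B (convDir α f (p - q) + convDir α (f - g) q) := wnormE_congr_ae hsplit
    _ ≤ wnormE α A B (convDir α f (p - q)) + wnormE α A B (convDir α (f - g) q) :=
        wnormE_add_le (measurable_convDir hf (hp.sub hq)) _
    _ ≤ _ := add_le_add (wnormE_convDir_le hf (hp.sub hq)) (wnormE_convDir_le (hf.sub hg) hq)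

lemma snormE_convDir_sub_convDir_le {f g p q : ℝ → ℂ} (hf : Measurable f) (hg : Measurable g)
    (hp : Measurable p) (hq : Measurable q) (hfW : wnormE α A B f < ⊤)
    (hgW : wnormE α A B g < ⊤) (hpS : snormE α A B p < ⊤) (hqS : snormE α A B q < ⊤) :
    snormE α A B (convDir α f p - convDir α g q) ≤
      wnormE α A B f * snormE α A B (p - q) + snormE α A B (f - g) * wnormE α A B q := by
  have hsplit : convDir α f p - convDir α g q = convDir α f (p - q) + convDir α (f - g) q :=
    funext fun s => convDir_sub_convDir (integrable_mul_sub_of_snormE_lt_top hf hp hfW hpS s)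
      (integrable_mul_sub_of_snormE_lt_top hf hq hfW hqS s)
      (integrable_mul_sub_of_snormE_lt_top hg hq hgW hqS s)
  calc snormE α A B (convDir α f p - convDir α g q)
      ≤ snormE α A B (convDir α f (p - q)) + snormE α A B (convDir α (f - g) q) :=
        hsplit ▸ snormE_add_le _ _
    _ ≤ _ := add_le_add (snormE_convDir_le_wnormE_mul_snormE hf _)
        (snormE_convDir_le_snormE_mul_wnormE _ hq)

end Convolution

section Telescoping

variable {α : ℝ} {A B : ℂ} {ι : Type*} {N : (ℝ → ℂ) → ℝ≥0∞} {φ ψ : ι → ℝ → ℂ} {a D : ℝ≥0∞}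

/- `f` and `g` are products of `k + 1` factors; `N` stands for `wnormE` or `snormE`, and `hstep`
is the one place where the two differ. -/
theorem sub_foldl_convDir_le (ha : a ≠ ⊤) (hφm : ∀ j, Measurable (φ j))
    (hψm : ∀ j, Measurable (ψ j)) (hφ : ∀ j, wnormE α A B (φ j) ≤ a)
    (hψ : ∀ j, wnormE α A B (ψ j) ≤ a) (hD : ∀ j, N (φ j - ψ j) ≤ D)
    (hstep : ∀ f g j, Measurable f → Measurable g → wnormE α A B f < ⊤ → wnormE α A B g < ⊤ →
      N (convDir α f (φ j) - convDir α g (ψ j)) ≤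
        wnormE α A B f * N (φ j - ψ j) + N (f - g) * wnormE α A B (ψ j))
    (I : List ι) {k : ℕ} {f g : ℝ → ℂ} (hf : Measurable f) (hg : Measurable g)
    (hfW : wnormE α A B f ≤ a ^ (k + 1)) (hgW : wnormE α A B g ≤ a ^ (k + 1))
    (hfg : N (f - g) ≤ (k + 1 : ℕ) * a ^ k * D) :
    N ((I.map φ).foldl (convDir α) f - (I.map ψ).foldl (convDir α) g) ≤
      (k + I.length + 1 : ℕ) * a ^ (k + I.length) * D := by
  induction I generalizing k f g with
  | nil => simpa using hfg
  | cons j I ih =>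
    have hpow : a ^ (k + 1) < ⊤ := ENNReal.pow_lt_top ha.lt_top
    have hfg' : N (convDir α f (φ j) - convDir α g (ψ j)) ≤ (k + 1 + 1 : ℕ) * a ^ (k + 1) * D :=
      calc _ ≤ wnormE α A B f * N (φ j - ψ j) + N (f - g) * wnormE α A B (ψ j) :=
            hstep f g j hf hg (hfW.trans_lt hpow) (hgW.trans_lt hpow)
        _ ≤ a ^ (k + 1) * D + (k + 1 : ℕ) * a ^ k * D * a :=
            add_le_add (mul_le_mul' hfW (hD j)) (mul_le_mul' hfg (hψ j))
        _ = (k + 1 + 1 : ℕ) * a ^ (k + 1) * D := by push_cast; ring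
    convert ih (measurable_convDir hf (hφm j)) (measurable_convDir hg (hψm j))
      ((wnormE_convDir_le hf (hφm j)).trans (pow_succ a (k + 1) ▸ mul_le_mul' hfW (hφ j)))
      ((wnormE_convDir_le hg (hψm j)).trans (pow_succ a (k + 1) ▸ mul_le_mul' hgW (hψ j)))
      hfg' using 3 <;> simp only [List.map_cons, List.foldl_cons, List.length_cons] <;> ring_nf

theorem sub_convList_le (ha : a ≠ ⊤) (hφm : ∀ j, Measurable (φ j))
    (hψm : ∀ j, Measurable (ψ j)) (hφ : ∀ j, wnormE α A B (φ j) ≤ a)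
    (hψ : ∀ j, wnormE α A B (ψ j) ≤ a) (hD : ∀ j, N (φ j - ψ j) ≤ D)
    (hstep : ∀ f g j, Measurable f → Measurable g → wnormE α A B f < ⊤ → wnormE α A B g < ⊤ →
      N (convDir α f (φ j) - convDir α g (ψ j)) ≤
        wnormE α A B f * N (φ j - ψ j) + N (f - g) * wnormE α A B (ψ j))
    {w : List ι} (hw : w ≠ []) :
    N (convList α (w.map φ) - convList α (w.map ψ)) ≤ w.length * a ^ (w.length - 1) * D := by
  obtain ⟨i, I, rfl⟩ := List.exists_cons_of_ne_nil hw
  simpa [convList] using sub_foldl_convDir_le ha hφm hψm hφ hψ hD hstep I (k := 0) (hφm i) (hψm i)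
    (by simpa using hφ i) (by simpa using hψ i) (by simpa using hD i)

end Telescoping

def multiIndexWord {m : ℕ} (l : Fin m → ℕ) : List (Fin m) :=
  (List.finRange m).flatMap fun i => List.replicate (l i) i

lemma length_multiIndexWord {m : ℕ} (l : Fin m → ℕ) :
    (multiIndexWord l).length = ∑ i, l i := by
  simp [multiIndexWord, List.length_flatMap, Fin.sum_univ_def]

lemma iterConv_eq_convList_map (α : ℝ) {m : ℕ} (φ : Fin m → ℝ → ℂ) (l : Fin m → ℕ) :
    iterConv α φ l = convList α ((multiIndexWord l).map φ) := by
  simp [iterConv, multiIndexWord, List.map_flatMap]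

theorem iterConv_difference_estimate_general
    (α : ℝ) (A B : ℂ)
    (m : ℕ)
    (φ ψ : Fin m → ℝ → ℂ)
    (hmφ : ∀ i, Measurable (φ i)) (hmψ : ∀ i, Measurable (ψ i))
    (a : ℝ)
    (hφ : ∀ i, wnormE α A B (φ i) ≤ ENNReal.ofReal a)
    (hψ : ∀ i, wnormE α A B (ψ i) ≤ ENNReal.ofReal a)
    (l : Fin m → ℕ) (hl : 1 ≤ ∑ i, l i) :
    wnormE α A B (fun s => iterConv α φ l s - iterConv α ψ l s) ≤
      ((∑ i, l i : ℕ) : ENNReal) * ENNReal.ofReal a ^ ((∑ i, l i) - 1) *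
        ⨆ i : Fin m, wnormE α A B (fun s => φ i s - ψ i s) ∧
    ((∀ i, snormE α A B (φ i) < ⊤) → (∀ i, snormE α A B (ψ i) < ⊤) →
      snormE α A B (fun s => iterConv α φ l s - iterConv α ψ l s) ≤
        ((∑ i, l i : ℕ) : ENNReal) * ENNReal.ofReal a ^ ((∑ i, l i) - 1) *
          ⨆ i : Fin m, snormE α A B (fun s => φ i s - ψ i s)) := by
  have hw : multiIndexWord l ≠ [] := List.ne_nil_of_length_pos (length_multiIndexWord l ▸ hl)
  have hφW i : wnormE α A B (φ i) < ⊤ := (hφ i).trans_lt ENNReal.ofReal_lt_top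
  have hψW i : wnormE α A B (ψ i) < ⊤ := (hψ i).trans_lt ENNReal.ofReal_lt_top
  simp only [iterConv_eq_convList_map, ← length_multiIndexWord l]
  refine ⟨?_, fun hφS hψS => ?_⟩
  · exact sub_convList_le ENNReal.ofReal_ne_top hmφ hmψ hφ hψ
      (le_iSup (fun i => wnormE α A B (φ i - ψ i)))
      (fun f g j hf hg hfW hgW => wnormE_convDir_sub_convDir_le hf hg (hmφ j) (hmψ j) hfW hgW
        (hφW j) (hψW j)) hw
  · exact sub_convList_le ENNReal.ofReal_ne_top hmφ hmψ hφ hψ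
      (le_iSup (fun i => snormE α A B (φ i - ψ i)))
      (fun f g j hf hg hfW hgW => snormE_convDir_sub_convDir_le hf hg (hmφ j) (hmψ j) hfW hgW
        (hφS j) (hψS j)) hw

/-- Lemma 4.4 of the paper. Difference estimate for multi-convolution
powers: `‖φ^{*l} − ψ^{*l}‖ ≤ |l|·a^{|l|−1}·maxᵢ ‖φᵢ − ψᵢ‖`, in both the integral norm
and the sup norm. -/
theorem iterConv_difference_estimate
    (α : ℝ) (A B : ℂ)
    (hAB : (Complex.exp (α * Complex.I) * A).re < (Complex.exp (α * Complex.I) * B).re)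
    (m : ℕ) (hm : 1 ≤ m)
    (φ ψ : Fin m → ℝ → ℂ)
    (hmφ : ∀ i, Measurable (φ i)) (hmψ : ∀ i, Measurable (ψ i))
    (a : ℝ) (ha : 0 ≤ a)
    (hφ : ∀ i, wnormE α A B (φ i) ≤ ENNReal.ofReal a)
    (hψ : ∀ i, wnormE α A B (ψ i) ≤ ENNReal.ofReal a)
    (l : Fin m → ℕ) (hl : 1 ≤ ∑ i, l i) :
    wnormE α A B (fun s => iterConv α φ l s - iterConv α ψ l s) ≤
      ((∑ i, l i : ℕ) : ENNReal) * ENNReal.ofReal a ^ ((∑ i, l i) - 1) *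
        ⨆ i : Fin m, wnormE α A B (fun s => φ i s - ψ i s) ∧
    ((∀ i, snormE α A B (φ i) < ⊤) → (∀ i, snormE α A B (ψ i) < ⊤) →
      snormE α A B (fun s => iterConv α φ l s - iterConv α ψ l s) ≤
        ((∑ i, l i : ℕ) : ENNReal) * ENNReal.ofReal a ^ ((∑ i, l i) - 1) *
          ⨆ i : Fin m, snormE α A B (fun s => φ i s - ψ i s)) :=
  iterConv_difference_estimate_general α A B m φ ψ hmφ hmψ a hφ hψ l hl
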